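/- arXiv:2111.08348 — 5 statements merged into one kernel-verified Lean document; each statement's English description precedes it below -/
import Mathlib

section
/- Let (p_y)_{y∈ℕ} and (p_{y,z})_{0≤z≤y} be families of real numbers in [0,1] satisfying: (1) p_0 = 0; (2) p_1 = 1; (3) for all y,z with 0 ≤ z ≤ y, p_{y,z} ≥ (1/2^z) · ∑_{ℓ=0}^{z} C(z,ℓ) · p_{y-ℓ}; (4) for all y ≥ 2, p_y = min{ p_{y,z} | 1 ≤ z ≤ y }. Then for all y ≥ 1, p_y ≥ 2/3. -/
/-!
Strong induction on `y`. For `y ≥ 2` pick `z` with `p y = p_{y,z}`; the mean inequality (3) reads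
`(2^z - 1) p_y ≥ ∑_{ℓ=1}^{z} C(z,ℓ) p_{y-ℓ}`. When `z < y` every `p_{y-ℓ}` on the right is
at least `2/3` by induction. When `z = y` the term `p_0 = 0` costs `2/3`, but the term
`C(y,y-1) p_1 = y ≥ 2` gains at least `y/3 ≥ 2/3`, so in both cases the right side is at least
`2/3 (2^z - 1)`.
-/

open Finset

lemma sum_range_choose_succ (z : ℕ) :
    ∑ i ∈ range z, (z.choose (i + 1) : ℝ) = 2 ^ z - 1 := by
  have h : ∑ i ∈ range (z + 1), (z.choose i : ℝ) = 2 ^ z := by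
    exact_mod_cast Nat.sum_range_choose z
  rw [sum_range_succ', Nat.choose_zero_right, Nat.cast_one] at h
  linarith

lemma mul_sum_le_sum_mul_of_le {ι : Type*} (s : Finset ι) (w a : ι → ℝ) {c : ℝ}
    (hw : ∀ i ∈ s, 0 ≤ w i) (ha : ∀ i ∈ s, c ≤ a i) :
    c * ∑ i ∈ s, w i ≤ ∑ i ∈ s, w i * a i := by
  rw [mul_sum]
  exact sum_le_sum fun i hi => by rw [mul_comm]; exact mul_le_mul_of_nonneg_left (ha i hi) (hw i hi)

lemma two_thirds_mul_le_sum_choose_mul (p : ℕ → ℝ) {y z : ℕ} (hy : 2 ≤ y) (hzy : z ≤ y)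
    (h0 : p 0 = 0) (h1 : p 1 = 1) (ih : ∀ k, 1 ≤ k → k < y → 2 / 3 ≤ p k) :
    2 / 3 * (2 ^ z - 1) ≤ ∑ i ∈ range z, (z.choose (i + 1) : ℝ) * p (y - (i + 1)) := by
  rcases hzy.lt_or_eq with hzy | hzy
  · rw [← sum_range_choose_succ]
    exact mul_sum_le_sum_mul_of_le _ _ _ (fun i _ => Nat.cast_nonneg _)
      fun i hi => ih _ (by have := mem_range.mp hi; omega) (by omega)
  · subst hzy
    obtain ⟨m, rfl⟩ : ∃ m, z = m + 2 := ⟨z - 2, by omega⟩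
    have hchoose := sum_range_choose_succ (m + 2)
    have hlast : ((m + 2).choose (m + 1) : ℝ) = m + 2 := by
      rw [Nat.choose_succ_self_right]; push_cast; ring
    simp only [sum_range_succ, Nat.choose_self, hlast] at hchoose ⊢
    rw [show m + 2 - (m + 1 + 1) = 0 by omega, show m + 2 - (m + 1) = 1 by omega, h0, h1]
    have hhead := mul_sum_le_sum_mul_of_le (range m) (fun i => ((m + 2).choose (i + 1) : ℝ))
      (fun i => p (m + 2 - (i + 1))) (c := 2 / 3) (fun i _ => Nat.cast_nonneg _)
      fun i hi => ih _ (by have := mem_range.mp hi; omega) (by omega)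
    push_cast at hchoose hhead ⊢
    linarith [(Nat.cast_nonneg m : (0 : ℝ) ≤ m)]

theorem stmt_2_general (p : ℕ → ℝ) (q : ℕ → ℕ → ℝ)
    (h0 : p 0 = 0) (h1 : p 1 = 1)
    (h3 : ∀ y z, z ≤ y →
      q y z ≥ (1 / 2 ^ z : ℝ) * ∑ ℓ ∈ Finset.range (z + 1), (z.choose ℓ : ℝ) * p (y - ℓ))
    (h4 : ∀ y, 2 ≤ y → IsLeast {x : ℝ | ∃ z, 1 ≤ z ∧ z ≤ y ∧ x = q y z} (p y)) :
    ∀ y, 1 ≤ y → p y ≥ 2 / 3 := by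
  intro y
  induction y using Nat.strong_induction_on with
  | _ y ih =>
  intro hy
  rcases (show y = 1 ∨ 2 ≤ y by omega) with rfl | hy2
  · rw [h1]; norm_num
  obtain ⟨z, hz, hzy, hpq⟩ := (h4 y hy2).1
  have hmean := h3 y z hzy
  rw [← hpq, sum_range_succ', Nat.choose_zero_right, Nat.cast_one, one_mul, Nat.sub_zero,
    ge_iff_le, one_div, inv_mul_le_iff₀ (by positivity)] at hmean
  have htail := two_thirds_mul_le_sum_choose_mul p hy2 hzy h0 h1 fun k hk hky => ih k hky hk
  have hpow : (2 : ℝ) ≤ 2 ^ z := le_self_pow₀ (by norm_num) (by omega)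
  nlinarith

theorem stmt_2 (p : ℕ → ℝ) (q : ℕ → ℕ → ℝ)
    (hp01 : ∀ y, p y ∈ Set.Icc (0 : ℝ) 1)
    (hq01 : ∀ y z, z ≤ y → q y z ∈ Set.Icc (0 : ℝ) 1)
    (h0 : p 0 = 0) (h1 : p 1 = 1)
    (h3 : ∀ y z, z ≤ y →
      q y z ≥ (1 / 2 ^ z : ℝ) * ∑ ℓ ∈ Finset.range (z + 1), (z.choose ℓ : ℝ) * p (y - ℓ))
    (h4 : ∀ y, 2 ≤ y → IsLeast {x : ℝ | ∃ z, 1 ≤ z ∧ z ≤ y ∧ x = q y z} (p y)) :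
    ∀ y, 1 ≤ y → p y ≥ 2 / 3 :=
  stmt_2_general p q h0 h1 h3 h4
end

section
/- Let G = (V,E) be a finite simple graph and s : V → Bool. Say a vertex u is 'stable' if neither of the following holds: (Candidacy) s(u) = ⊥ and all neighbours v of u have s(v) = ⊥; (Withdrawal) s(u) = ⊤ and some neighbour v of u has s(v) = ⊤. If every vertex is stable, then β(s) = {u | s(u) = ⊤ and all neighbours of u have value ⊥} is a maximal independent set of G. -/
def beta {V : Type*} (G : SimpleGraph V) (s : V → Bool) : Set V :=
  {u | s u = true ∧ ∀ v, G.Adj u v → s v = false}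

section Beta

variable {V : Type*} {G : SimpleGraph V} {s : V → Bool}

theorem not_adj_of_mem_beta {u v : V} (hu : u ∈ beta G s) (hv : v ∈ beta G s) :
    ¬ G.Adj u v := fun huv => by
  simpa [hu.2 v huv] using hv.1

theorem mem_beta_of_no_withdrawal
    (hw : ∀ u, ¬ (s u = true ∧ ∃ v, G.Adj u v ∧ s v = true)) {u : V} (hu : s u = true) :
    u ∈ beta G s :=
  ⟨hu, fun v huv => by simpa using fun hv => hw u ⟨hu, v, huv, hv⟩⟩

theorem exists_adj_mem_beta_of_not_mem
    (hc : ∀ u, ¬ (s u = false ∧ ∀ v, G.Adj u v → s v = false))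
    (hw : ∀ u, ¬ (s u = true ∧ ∃ v, G.Adj u v ∧ s v = true)) {u : V} (hu : u ∉ beta G s) :
    ∃ v ∈ beta G s, G.Adj u v := by
  have hsu : s u = false := by
    simpa using fun h => hu (mem_beta_of_no_withdrawal hw h)
  obtain ⟨v, huv, hsv⟩ : ∃ v, G.Adj u v ∧ s v = true := by
    simpa [hsu] using hc u
  exact ⟨v, mem_beta_of_no_withdrawal hw hsv, huv⟩

end Beta

theorem stmt_6_general {V : Type*} (G : SimpleGraph V) (s : V → Bool)
    (hstable : ∀ u : V,
      ¬ (s u = false ∧ ∀ v, G.Adj u v → s v = false) ∧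
      ¬ (s u = true ∧ ∃ v, G.Adj u v ∧ s v = true)) :
    (∀ u ∈ beta G s, ∀ v ∈ beta G s, ¬ G.Adj u v) ∧
    (∀ w : V, w ∉ beta G s → ∃ v ∈ beta G s, G.Adj w v) := by
  obtain ⟨hc, hw⟩ := forall_and.mp hstable
  exact ⟨fun _ hu _ hv => not_adj_of_mem_beta hu hv,
    fun _ => exists_adj_mem_beta_of_not_mem hc hw⟩

theorem stmt_6 {V : Type*} [Fintype V] (G : SimpleGraph V) (s : V → Bool)
    (hstable : ∀ u : V,
      ¬ (s u = false ∧ ∀ v, G.Adj u v → s v = false) ∧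
      ¬ (s u = true ∧ ∃ v, G.Adj u v ∧ s v = true)) :
    (∀ u ∈ beta G s, ∀ v ∈ beta G s, ¬ G.Adj u v) ∧
    (∀ w : V, w ∉ beta G s → ∃ v ∈ beta G s, G.Adj w v) :=
  stmt_6_general G s hstable
end

section
/- Let G = (V,E) be a finite simple graph and s : V → Bool. If β(s) = {u | s(u) = ⊤ and all neighbours of u have s-value ⊥} is a maximal independent set of G, then no vertex satisfies the Candidacy guard (s(u) = ⊥ and all neighbours ⊥) and no vertex satisfies the Withdrawal guard (s(u) = ⊤ and some neighbour ⊤). -/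
section

variable {V : Type*} {G : SimpleGraph V} {s : V → Bool}

theorem eq_false_of_adj_mem_beta {u v : V} (hv : v ∈ beta G s) (huv : G.Adj u v) :
    s u = false :=
  hv.2 u huv.symm

theorem not_candidacy_of_beta_dominating
    (hmax : ∀ w : V, w ∉ beta G s → ∃ v ∈ beta G s, G.Adj w v) (u : V) :
    ¬ (s u = false ∧ ∀ v, G.Adj u v → s v = false) := by
  rintro ⟨hu, hnbrs⟩
  have hu_not : u ∉ beta G s := fun hub => Bool.false_ne_true (hu.symm.trans hub.1)
  obtain ⟨v, hv, huv⟩ := hmax u hu_not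
  exact Bool.false_ne_true ((hnbrs v huv).symm.trans hv.1)

theorem not_withdrawal_of_beta_dominating
    (hmax : ∀ w : V, w ∉ beta G s → ∃ v ∈ beta G s, G.Adj w v) (u : V) :
    ¬ (s u = true ∧ ∃ v, G.Adj u v ∧ s v = true) := by
  rintro ⟨hu, v, huv, hv⟩
  have hu_not : u ∉ beta G s := fun hub => by simp [hub.2 v huv] at hv
  obtain ⟨w, hw, huw⟩ := hmax u hu_not
  simp [eq_false_of_adj_mem_beta hw huw] at hu

end

theorem stmt_7_general {V : Type*} (G : SimpleGraph V) (s : V → Bool)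
    (hmax : ∀ w : V, w ∉ beta G s → ∃ v ∈ beta G s, G.Adj w v) :
    ∀ u : V,
      ¬ (s u = false ∧ ∀ v, G.Adj u v → s v = false) ∧
      ¬ (s u = true ∧ ∃ v, G.Adj u v ∧ s v = true) :=
  fun u => ⟨not_candidacy_of_beta_dominating hmax u, not_withdrawal_of_beta_dominating hmax u⟩

theorem stmt_7 {V : Type*} [Fintype V] (G : SimpleGraph V) (s : V → Bool)
    (hind : ∀ u ∈ beta G s, ∀ v ∈ beta G s, ¬ G.Adj u v)
    (hmax : ∀ w : V, w ∉ beta G s → ∃ v ∈ beta G s, G.Adj w v) :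
    ∀ u : V,
      ¬ (s u = false ∧ ∀ v, G.Adj u v → s v = false) ∧
      ¬ (s u = true ∧ ∃ v, G.Adj u v ∧ s v = true) :=
  stmt_7_general G s hmax
end

section
/- Let G = (V,E) be a finite simple graph, and s, s' : V → Bool two configurations such that s' results from s by simultaneously applying, on a set S of vertices where the corresponding rule is enabled (at most one rule per vertex), either the Candidacy rule (requiring s(u)=⊥ and all neighbours ⊥, and possibly setting s'(u)=⊤) or the Withdrawal rule (requiring s(u)=⊤ and some neighbour ⊤, and possibly setting s'(u)=⊥), while vertices outside S keep their value. Then β(s) ⊆ β(s'). -/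
section Rules

variable {V : Type*} (G : SimpleGraph V) (s : V → Bool)

def CandidacyEnabled (u : V) : Prop :=
  s u = false ∧ ∀ v, G.Adj u v → s v = false

def WithdrawalEnabled (u : V) : Prop :=
  s u = true ∧ ∃ v, G.Adj u v ∧ s v = true

def RuleEnabled (u : V) : Prop :=
  CandidacyEnabled G s u ∨ WithdrawalEnabled G s u

variable {G s} {u v : V}

theorem not_ruleEnabled_of_mem_beta (hu : u ∈ beta G s) : ¬ RuleEnabled G s u := by
  rintro (⟨hfalse, -⟩ | ⟨-, v, hadj, hv⟩)
  · simp [hu.1] at hfalse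
  · simp [hu.2 v hadj] at hv

theorem not_ruleEnabled_of_adj_mem_beta (hu : u ∈ beta G s) (hadj : G.Adj u v) :
    ¬ RuleEnabled G s v := by
  rintro (⟨-, hnb⟩ | ⟨hv, -⟩)
  · simpa [hu.1] using hnb u hadj.symm
  · simp [hu.2 v hadj] at hv

theorem mem_beta_of_eq_on_closedNeighborhood {s' : V → Bool} (hu : u ∈ beta G s)
    (hself : s' u = s u) (hnb : ∀ v, G.Adj u v → s' v = s v) : u ∈ beta G s' :=
  ⟨hself ▸ hu.1, fun v hadj => (hnb v hadj).trans (hu.2 v hadj)⟩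

end Rules

theorem stmt_9_general {V : Type*} (G : SimpleGraph V) (s s' : V → Bool)
    (S : Set V)
    (hout : ∀ u ∉ S, s' u = s u)
    (hin : ∀ u ∈ S,
      (s u = false ∧ ∀ v, G.Adj u v → s v = false) ∨
      (s u = true ∧ ∃ v, G.Adj u v ∧ s v = true)) :
    beta G s ⊆ beta G s' := by
  intro u hu
  have not_mem_of_disabled {w : V} (hw : ¬ RuleEnabled G s w) : w ∉ S := fun hS => hw (hin w hS)
  exact mem_beta_of_eq_on_closedNeighborhood hu
    (hout u (not_mem_of_disabled (not_ruleEnabled_of_mem_beta hu)))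
    fun v hadj => hout v (not_mem_of_disabled (not_ruleEnabled_of_adj_mem_beta hu hadj))

theorem stmt_9 {V : Type*} [Fintype V] (G : SimpleGraph V) (s s' : V → Bool)
    (S : Set V)
    (hout : ∀ u ∉ S, s' u = s u)
    (hin : ∀ u ∈ S,
      (s u = false ∧ ∀ v, G.Adj u v → s v = false) ∨
      (s u = true ∧ ∃ v, G.Adj u v ∧ s v = true)) :
    beta G s ⊆ beta G s' :=
  stmt_9_general G s s' S hout hin
end

section
/- Let G = (V,E) be a finite simple graph and s, s' : V → Bool with s' obtained from s by a valid transition of the two-rule algorithm (Candidacy/Withdrawal as above). If A is a candidate set of s, then A' = {u ∈ A | s'(u) = ⊤} is a candidate set of s'. -/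
theorem stmt_11 {V : Type*} [Fintype V] (G : SimpleGraph V) (s s' : V → Bool)
    (S : Set V)
    (hout : ∀ u ∉ S, s' u = s u)
    (hin : ∀ u ∈ S,
      (s u = false ∧ ∀ v, G.Adj u v → s v = false) ∨
      (s u = true ∧ ∃ v, G.Adj u v ∧ s v = true))
    (A : Set V)
    (hA : ∀ u ∈ A, s u = true ∧ ∀ v, G.Adj u v → s v = false ∨ v ∈ A) :
    ∀ u ∈ {u ∈ A | s' u = true}, s' u = true ∧
      ∀ v, G.Adj u v → s' v = false ∨ v ∈ {u ∈ A | s' u = true} := by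
  rintro u ⟨huA, hu'⟩
  refine ⟨hu', fun v hadj => ?_⟩
  obtain ⟨hsu, hnb⟩ := hA u huA
  rcases hnb v hadj with hvf | hvA
  · -- s v = false; show s' v = false
    left
    by_cases hvS : v ∈ S
    · rcases hin v hvS with ⟨_, hall⟩ | ⟨hvt, _⟩
      · have := hall u hadj.symm
        rw [hsu] at this; exact absurd this (by simp)
      · rw [hvf] at hvt; exact absurd hvt (by simp)
    · rw [hout v hvS, hvf]
  · by_cases hv' : s' v = true
    · exact Or.inr ⟨hvA, hv'⟩
    · exact Or.inl (by simpa using hv')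
end
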